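/- arXiv:1211.4927 — 7 statements merged into one kernel-verified Lean document; each statement's English description precedes it below -/
import Mathlib

section
/- Let A, B be distinct points and Z a circle such that segment AB does not intersect Z and A, B lie outside Z. If P* is a point maximizing the angle ∠AP*B over all points at distance at most r from the center of Z (where r is the radius of Z), then P* lies on the boundary of Z. -/
/-!
If the maximizer `P*` were an interior point of the disk, move it slightly towards the midpoint `M`
of `AB`, which lies outside the disk. For `Q` strictly between `P*` and `M`, the exterior angle
theorem in the triangles `A P* Q` and `B P* Q` gives `∠ A Q B = ∠ A P* B + ∠ P* A Q + ∠ P* B Q`,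
and the last two angles cannot both vanish unless `A, P*, B` are collinear. They are not: `P*` is
off the segment `AB`, and `∠ A P* B` dominates the positive angle at a point of the disk off the
line `AB`.
-/

open EuclideanGeometry Real

abbrev Pt := EuclideanSpace ℝ (Fin 2)

open Filter Topology

namespace EuclideanGeometry

variable {V P : Type*} [NormedAddCommGroup V] [InnerProductSpace ℝ V] [MetricSpace P]
  [NormedAddTorsor V P]

theorem angle_lt_angle_of_sbtw_of_sbtw {a b m x y : P} (hm : Sbtw ℝ a m b) (hy : Sbtw ℝ x y m)
    (hx : ¬Collinear ℝ ({a, x, b} : Set P)) : ∠ a x b < ∠ a y b := by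
  have ext_a : ∠ a y m = ∠ y a x + ∠ a x m := by
    rw [← hy.angle_eq_right a]; exact exterior_angle_eq_angle_add_angle m hy.symm
  have ext_b : ∠ b y m = ∠ y b x + ∠ b x m := by
    rw [← hy.angle_eq_right b]; exact exterior_angle_eq_angle_add_angle m hy.symm
  have pos : 0 < ∠ y a x + ∠ y b x := by
    by_contra! h
    have hya : ∠ y a x = 0 := by linarith [angle_nonneg y a x, angle_nonneg y b x]
    have hyb : ∠ y b x = 0 := by linarith [angle_nonneg y a x, angle_nonneg y b x]
    have ha : a ∈ line[ℝ, y, x] := (collinear_of_angle_eq_zero hya).mem_affineSpan_of_mem_of_ne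
      (by simp) (by simp) (by simp) hy.ne_left
    have hb : b ∈ line[ℝ, y, x] := (collinear_of_angle_eq_zero hyb).mem_affineSpan_of_mem_of_ne
      (by simp) (by simp) (by simp) hy.ne_left
    exact hx ((collinear_insert_insert_of_mem_affineSpan_pair ha hb).subset
      (by intro p hp; simp at hp ⊢; tauto))
  rw [← angle_add_angle_eq_of_sbtw (p := x) hm, ← angle_add_angle_eq_of_sbtw (p := y) hm]
  linarith [angle_comm m x b, angle_comm m y b]

theorem _root_.IsOpen.exists_not_collinear (hV : 1 < Module.rank ℝ V) {U : Set P} (hU : IsOpen U)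
    (hne : U.Nonempty) {a b : P} (hab : a ≠ b) : ∃ q ∈ U, ¬Collinear ℝ ({a, q, b} : Set P) := by
  by_contra! h
  have hsub : U ⊆ line[ℝ, a, b] := fun q hq =>
    (h q hq).mem_affineSpan_of_mem_of_ne (by simp) (by simp) (by simp) hab
  have htop : line[ℝ, a, b] = ⊤ := top_unique (hU.affineSpan_eq_top hne ▸ affineSpan_le.2 hsub)
  have hspan : vectorSpan ℝ {a, b} = ⊤ := by
    rw [← direction_affineSpan, htop, AffineSubspace.direction_top]
  have hcol := collinear_pair ℝ a b
  rw [Collinear, hspan, rank_top] at hcol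
  exact hV.not_ge hcol

theorem _root_.IsOpen.exists_sbtw {U : Set P} (hU : IsOpen U) {x y : P} (hx : x ∈ U)
    (hxy : x ≠ y) : ∃ z ∈ U, Sbtw ℝ x z y := by
  have hnear : ∀ᶠ t in 𝓝 (0 : ℝ), AffineMap.lineMap x y t ∈ U ∧ t < 1 :=
    ((AffineMap.lineMap_continuous.tendsto' 0 x (by simp)).eventually (hU.mem_nhds hx)).and
      (gt_mem_nhds one_pos)
  obtain ⟨t, ⟨htU, ht1⟩, ht0⟩ := ((hnear.filter_mono nhdsWithin_le_nhds).and
    (self_mem_nhdsWithin (s := Set.Ioi 0))).exists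
  exact ⟨_, htU, sbtw_lineMap_iff.2 ⟨hxy, ht0, ht1⟩⟩

end EuclideanGeometry

theorem stmt1_general (A B P Pstar : Pt) (r : ℝ) (hAB : A ≠ B)
    (hdisj : Disjoint (segment ℝ A B) (Metric.closedBall P r))
    (hmem : Pstar ∈ Metric.closedBall P r)
    (hmax : ∀ Q ∈ Metric.closedBall P r, ∠ A Q B ≤ ∠ A Pstar B) :
    dist Pstar P = r := by
  by_contra hne
  have hball : Pstar ∈ Metric.ball P r := lt_of_le_of_ne hmem hne
  have hpos : 0 < ∠ A Pstar B := by
    have hrank : 1 < Module.rank ℝ Pt := by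
      rw [← Module.finrank_eq_rank, finrank_euclideanSpace_fin]; norm_num
    obtain ⟨Q, hQ, hQA⟩ := Metric.isOpen_ball.exists_not_collinear hrank ⟨Pstar, hball⟩ hAB
    exact (angle_pos_of_not_collinear hQA).trans_le (hmax Q (Metric.ball_subset_closedBall hQ))
  have hncol : ¬Collinear ℝ ({A, Pstar, B} : Set Pt) := by
    intro hc
    rcases collinear_iff_eq_or_eq_or_angle_eq_zero_or_angle_eq_pi.1 hc with h | h | h | h
    · exact Set.disjoint_left.1 hdisj (left_mem_segment ℝ A B) (h ▸ hmem)
    · exact Set.disjoint_left.1 hdisj (right_mem_segment ℝ A B) (h ▸ hmem)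
    · exact hpos.ne' h
    · exact Set.disjoint_left.1 hdisj (angle_eq_pi_iff_sbtw.1 h).wbtw.mem_segment hmem
  have hM : Sbtw ℝ A (midpoint ℝ A B) B := sbtw_midpoint_of_ne ℝ hAB
  have hPM : Pstar ≠ midpoint ℝ A B := fun h =>
    Set.disjoint_left.1 hdisj (midpoint_mem_segment A B) (h ▸ hmem)
  obtain ⟨Q, hQ, hPQM⟩ := Metric.isOpen_ball.exists_sbtw hball hPM
  exact (angle_lt_angle_of_sbtw_of_sbtw hM hPQM hncol).not_ge
    (hmax Q (Metric.ball_subset_closedBall hQ))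

/-- If segment `AB` is disjoint from the closed disk `Z` of radius `r` about `P`
and `A`, `B` lie outside `Z`, then any maximizer of the angle `∠ A Q B` over
`Z` lies on the boundary circle of `Z`. -/
theorem stmt1 (A B P Pstar : Pt) (r : ℝ) (hr : 0 < r) (hAB : A ≠ B)
    (hA : dist A P > r) (hB : dist B P > r)
    (hdisj : Disjoint (segment ℝ A B) (Metric.closedBall P r))
    (hmem : Pstar ∈ Metric.closedBall P r)
    (hmax : ∀ Q ∈ Metric.closedBall P r, ∠ A Q B ≤ ∠ A Pstar B) :
    dist Pstar P = r :=
  stmt1_general A B P Pstar r hAB hdisj hmem hmax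
end

section
/- Let A, B be distinct points, Z a circle of radius r centered at P with A, B outside Z and segment AB disjoint from Z. If P* on the boundary of Z maximizes ∠AP*B over the closed disk, then the circle passing through A, B, and P* is internally tangent to Z at P*; i.e., the open region bounded by the arc AP*B on the side of P* contains no point of the open disk Z other than boundary touching at P*. -/
open EuclideanGeometry Real

/-!
If `|OP| < r + r'`, some point `X` of `Z` lies strictly inside the circumcircle. The lens
`Z ∩ closedBall O r'` is convex and misses the line `AB` (a point of that line inside the
circumcircle lies on the chord `AB`, which misses `Z`), so `X` lies on the same side of `AB` as
`P*`. Extending `AX` to meet the circle again at `C`, the inscribed angle theorem gives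
`∠ACB = ∠AP*B` and the exterior angle theorem gives `∠AXB > ∠ACB`, contradicting maximality.
Finally `|OP| = |OP*| + |P*P|` puts `P*` between `O` and `P`.
-/

open Module

namespace EuclideanGeometry

variable {V P : Type*} [NormedAddCommGroup V] [InnerProductSpace ℝ V] [MetricSpace P]
  [NormedAddTorsor V P]

theorem Sphere.wbtw_of_mem_affineSpan_pair_of_dist_le {s : Sphere P} {A B z : P}
    (hA : A ∈ s) (hB : B ∈ s) (hAB : A ≠ B) (hz : z ∈ line[ℝ, A, B])
    (hzs : dist z s.center ≤ s.radius) : Wbtw ℝ A z B := by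
  have hcol : Collinear ℝ {A, z, B} := by
    simpa [Set.insert_comm] using collinear_insert_of_mem_affineSpan_pair hz
  exact hcol.wbtw_of_dist_eq_of_dist_le hA hzs hB hAB

theorem angle_lt_angle_of_sbtw {A Q C B : P} (h : Sbtw ℝ A Q C)
    (hB : ¬Collinear ℝ {Q, B, C}) : ∠ A C B < ∠ A Q B := by
  have hext := exterior_angle_eq_angle_add_angle (p₃ := B) A h
  have hC : ∠ B C Q = ∠ B C A := angle_eq_angle_of_angle_eq_pi B h.angle₃₂₁_eq_pi
  have hpos := angle_pos_of_not_collinear hB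
  rw [angle_comm A C B, ← hC, angle_comm A Q B]
  linarith

section Oriented

variable [Fact (finrank ℝ V = 2)] [Module.Oriented ℝ V (Fin 2)]

theorem oangle_sign_eq_of_isConnected {A B x y : P} {K : Set P} (hK : IsConnected K)
    (hKAB : ∀ z ∈ K, z ∉ line[ℝ, A, B]) (hx : x ∈ K) (hy : y ∈ K) :
    (∡ A x B).sign = (∡ A y B).sign := by
  by_cases hAB : A = B
  · simp [hAB]
  refine Real.Angle.sign_eq_of_continuousOn (f := fun z => ∡ A z B) hK ?_ ?_ hy hx
  · refine continuousOn_of_forall_continuousAt fun z hz => ?_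
    refine (continuousAt_oangle (x := (A, z, B)) ?_ ?_).comp (f := fun z => (A, z, B))
      (by fun_prop)
    · rintro (rfl : A = z)
      exact hKAB A hz (left_mem_affineSpan_pair ℝ A B)
    · rintro (rfl : B = z)
      exact hKAB B hz (right_mem_affineSpan_pair ℝ A B)
  · intro z hz
    rw [oangle_ne_zero_and_ne_pi_iff_affineIndependent]
    exact affineIndependent_of_ne_of_mem_of_notMem_of_mem hAB (left_mem_affineSpan_pair ℝ _ _)
      (hKAB z hz) (right_mem_affineSpan_pair ℝ _ _)

theorem Sphere.angle_eq_angle_of_oangle_sign_eq {s : Sphere P} {A B C D : P} (hA : A ∈ s)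
    (hB : B ∈ s) (hC : C ∈ s) (hD : D ∈ s) (hsign : (∡ A C B).sign = (∡ A D B).sign)
    (hne : (∡ A C B).sign ≠ 0) : ∠ A C B = ∠ A D B := by
  have hne' : (∡ A D B).sign ≠ 0 := hsign ▸ hne
  have hCA := left_ne_of_oangle_sign_ne_zero hne
  have hCB := right_ne_of_oangle_sign_ne_zero hne
  have hDA := left_ne_of_oangle_sign_ne_zero hne'
  have hDB := right_ne_of_oangle_sign_ne_zero hne'
  refine (angle_eq_iff_oangle_eq_of_sign_eq hCA hCB hDA hDB hsign).2 ?_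
  exact (Real.Angle.two_zsmul_eq_iff_eq hne hsign).1
    (Sphere.two_zsmul_oangle_eq hA hC hD hB hCA.symm hCB.symm hDA.symm hDB.symm)

theorem Sphere.angle_lt_angle_of_dist_center_lt {s : Sphere P} {A B X Q : P} (hA : A ∈ s)
    (hB : B ∈ s) (hX : X ∈ s) (hQ : dist Q s.center < s.radius)
    (hsign : (∡ A Q B).sign = (∡ A X B).sign) (hne : (∡ A X B).sign ≠ 0) :
    ∠ A X B < ∠ A Q B := by
  set C := s.secondInter A (Q -ᵥ A)
  have hAQC : Sbtw ℝ A Q C := s.sbtw_secondInter hA hQ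
  have hC : C ∈ s := (Sphere.secondInter_mem _).2 hA
  have hsignC : (∡ A C B).sign = (∡ A Q B).sign := by
    rw [← oangle_rotate_sign, ← oangle_rotate_sign A Q, oangle_rev A B C, oangle_rev A B Q,
      Real.Angle.sign_neg, Real.Angle.sign_neg, hAQC.oangle_sign_eq_left]
  have hneC : (∡ A C B).sign ≠ 0 := by rwa [hsignC, hsign]
  rw [← Sphere.angle_eq_angle_of_oangle_sign_eq hA hB hC hX (hsignC.trans hsign) hneC]
  refine angle_lt_angle_of_sbtw hAQC ?_
  rw [← oangle_sign_eq_zero_iff_collinear, ← hAQC.oangle_sign_eq, hAQC.oangle_sign_eq_left,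
    ← oangle_rotate_sign, oangle_rev, Real.Angle.sign_neg]
  simpa using hneC

end Oriented

theorem Sphere.angle_lt_angle_of_isConnected [Fact (finrank ℝ V = 2)] {s : Sphere P}
    {A B X Q : P} {K : Set P} (hAB : A ≠ B) (hK : IsConnected K)
    (hKAB : ∀ z ∈ K, z ∉ line[ℝ, A, B]) (hXK : X ∈ K) (hQK : Q ∈ K) (hA : A ∈ s) (hB : B ∈ s)
    (hX : X ∈ s) (hQ : dist Q s.center < s.radius) :
    ∠ A X B < ∠ A Q B := by
  have := FiniteDimensional.of_fact_finrank_eq_two (K := ℝ) (V := V)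
  -- Any orientation will do: it only serves to tell the two sides of `AB` apart.
  let _ : Module.Oriented ℝ V (Fin 2) := ⟨(finBasisOfFinrankEq ℝ V Fact.out).orientation⟩
  refine Sphere.angle_lt_angle_of_dist_center_lt hA hB hX hQ
    (oangle_sign_eq_of_isConnected hK hKAB hQK hXK) fun h => hKAB X hXK ?_
  rw [oangle_sign_eq_zero_iff_collinear] at h
  exact h.mem_affineSpan_of_mem_of_ne (by simp) (by simp) (by simp) hAB

end EuclideanGeometry

theorem stmt2_general (A B P Pstar O : Pt) (r r' : ℝ) (hr : 0 < r) (hr' : 0 < r')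
    (hAB : A ≠ B)
    (hdisj : Disjoint (segment ℝ A B) (Metric.closedBall P r))
    (hmem : dist Pstar P = r)
    (hmax : ∀ Q ∈ Metric.closedBall P r, ∠ A Q B ≤ ∠ A Pstar B)
    (hOA : dist O A = r') (hOB : dist O B = r') (hOP : dist O Pstar = r') :
    dist O P = r + r' ∧ Collinear ℝ ({P, Pstar, O} : Set Pt) := by
  have : Fact (finrank ℝ Pt = 2) := ⟨finrank_euclideanSpace_fin⟩
  let s : Sphere Pt := ⟨O, r'⟩
  have hAs : A ∈ s := mem_sphere'.2 hOA
  have hBs : B ∈ s := mem_sphere'.2 hOB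
  have hPs : Pstar ∈ s := mem_sphere'.2 hOP
  let K := Metric.closedBall P r ∩ Metric.closedBall O r'
  have hKAB : ∀ z ∈ K, z ∉ line[ℝ, A, B] := fun z hz hzAB =>
    Set.disjoint_left.1 hdisj (mem_segment_iff_wbtw.2 <|
      Sphere.wbtw_of_mem_affineSpan_pair_of_dist_le hAs hBs hAB hzAB hz.2) hz.1
  have hPK : Pstar ∈ K := ⟨hmem.le, (dist_comm Pstar O ▸ hOP).le⟩
  have htangent : dist O P = r + r' := by
    refine ((dist_triangle O Pstar P).trans_eq (by rw [hOP, hmem, add_comm])).antisymm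
      (not_lt.1 fun hlt => ?_)
    obtain ⟨X, hXO, hXP⟩ := Set.not_disjoint_iff.1 fun h =>
      ((disjoint_ball_closedBall_iff hr' hr.le).1 h).not_gt (by linarith)
    have hXK : X ∈ K := ⟨hXP, Metric.ball_subset_closedBall hXO⟩
    exact (hmax X hXP).not_gt <| Sphere.angle_lt_angle_of_isConnected hAB
      (((convex_closedBall P r).inter (convex_closedBall O r')).isConnected ⟨X, hXK⟩)
      hKAB hPK hXK hAs hBs hPs hXO
  have hw : Wbtw ℝ P Pstar O := dist_add_dist_eq_iff.1 <| by
    rw [dist_comm P Pstar, dist_comm Pstar O, dist_comm P O, hOP, hmem, htangent]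
  exact ⟨htangent, hw.collinear⟩

/-- If `Pstar` on the boundary of the disk `Z` of radius `r` about `P`
maximizes `∠ A Q B` over `Z` (with `A`, `B` outside `Z` and segment `AB`
disjoint from `Z`), then the circumcircle of `A`, `B`, `Pstar`, with center `O`
and radius `r'`, is tangent to `Z` at `Pstar`: `|OP| = r + r'` and
`P`, `Pstar`, `O` are collinear. -/
theorem stmt2 (A B P Pstar O : Pt) (r r' : ℝ) (hr : 0 < r) (hr' : 0 < r')
    (hAB : A ≠ B)
    (hA : dist A P > r) (hB : dist B P > r)
    (hdisj : Disjoint (segment ℝ A B) (Metric.closedBall P r))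
    (hmem : dist Pstar P = r)
    (hmax : ∀ Q ∈ Metric.closedBall P r, ∠ A Q B ≤ ∠ A Pstar B)
    (hOA : dist O A = r') (hOB : dist O B = r') (hOP : dist O Pstar = r') :
    dist O P = r + r' ∧ Collinear ℝ ({P, Pstar, O} : Set Pt) :=
  stmt2_general A B P Pstar O r r' hr hr' hAB hdisj hmem hmax hOA hOB hOP
end

section
/- Let A = (0, -1), B = (0, 1), and P a point with |AP| > r and |BP| > r for some r > 0, and suppose segment AB is disjoint from the closed disk of radius r about P. Then there exists r' > 0 satisfying the quadratic system: the point O = (x, 0) with 2 P_x x = P_x² + P_y² - 2 r' r - r² - 1 satisfies x² + 1 = r'², and (x - P_x)² + P_y² = (r + r')². Moreover, the maximizer P* of ∠AP'B over the disk is the intersection of the boundary circle of the disk with segment OP, where r' is the smaller positive root of the resulting quadratic in r'. -/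
open EuclideanGeometry Real

/-!
A circle through `(0, -1)` and `(0, 1)` has centre `(c, 0)` and radius `√(c² + 1)`, and the angle
`∠ A Q B` is constant on each of its arcs, with cosine `±c / √(c² + 1)`. Among these circles take the
smallest one externally tangent to the disk: eliminating `c` from the tangency condition leaves a
quadratic in the radius, whose least positive root is the `r'` of the statement, and the tangency
point `T` then lies on the same side of `AB` as `P`. A point of the disk off this circle lies strictly
outside it, and also outside its mirror image in `AB` when the centre is on `P`'s side, so it sees
`AB` under a strictly smaller angle than `T` does. Hence the maximizer lies on the circle, which the
disk touches only at `T`, the point of the segment from the centre to `P` at distance `r` from `P`.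
-/

/-- `2c / (δ - b)` is the root `(-b - δ) / 2a` rationalized, so it also makes sense for `a = 0`. -/
theorem exists_least_pos_root_of_discrim {K : Type*} [Field K] [LinearOrder K]
    [IsStrictOrderedRing K] {a b c δ : K} (hc : 0 < c) (hδ : 0 ≤ δ)
    (hd : discrim a b c = δ * δ) (hb : b < δ) :
    ∃ t₀ : K, 0 < t₀ ∧ a * (t₀ * t₀) + b * t₀ + c = 0 ∧ 2 * a * t₀ + b = -δ ∧
      ∀ t, 0 < t → a * (t * t) + b * t + c = 0 → t₀ ≤ t := by
  have hδb : 0 < δ - b := sub_pos.2 hb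
  rw [discrim] at hd
  refine ⟨2 * c / (δ - b), by positivity, ?_, ?_, fun t ht hroot => ?_⟩
  · field_simp
    linear_combination (-c) * hd
  · field_simp
    linear_combination (-1) * hd
  · have hsq : (2 * a * t + b) ^ 2 = δ ^ 2 := by
      rw [← discrim_eq_sq_of_quadratic_eq_zero hroot, discrim, hd, sq]
    have hbound := (abs_le_of_sq_le_sq' hsq.le hδ).1
    rw [div_le_iff₀ hδb]
    nlinarith

/-- Eliminating `x` leaves a quadratic in `r'` whose discriminant is `16 p²` times the product of the
powers of `(0, ±1)` with respect to the circle of radius `r` about `(p, q)`. -/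
theorem exists_least_tangent_radius {p q r : ℝ} (hp : p ≠ 0) (hr : 0 < r)
    (hA : r ^ 2 < p ^ 2 + (q + 1) ^ 2) (hB : r ^ 2 < p ^ 2 + (q - 1) ^ 2)
    (hseg : r < |p| ∨ 1 < |q|) :
    ∃ r' x : ℝ, 0 < r' ∧ 2 * p * x = p ^ 2 + q ^ 2 - 2 * r' * r - r ^ 2 - 1 ∧
      x ^ 2 + 1 = r' ^ 2 ∧
      (∀ r'' x'' : ℝ, 0 < r'' → 2 * p * x'' = p ^ 2 + q ^ 2 - 2 * r'' * r - r ^ 2 - 1 →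
        x'' ^ 2 + 1 = r'' ^ 2 → r' ≤ r'') ∧
      0 < p * (r * x + p * r') := by
  set k := p ^ 2 + q ^ 2 - 1 - r ^ 2
  have hD : 0 < k ^ 2 + 4 * p ^ 2 - 4 * r ^ 2 := by
    have hprod : k ^ 2 + 4 * p ^ 2 - 4 * r ^ 2 =
        (p ^ 2 + (q + 1) ^ 2 - r ^ 2) * (p ^ 2 + (q - 1) ^ 2 - r ^ 2) := by ring
    rw [hprod]
    exact mul_pos (by linarith) (by linarith)
  set w := √(k ^ 2 + 4 * p ^ 2 - 4 * r ^ 2)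
  have hw : 0 < w := sqrt_pos.2 hD
  have hw2 : w ^ 2 = k ^ 2 + 4 * p ^ 2 - 4 * r ^ 2 := sq_sqrt hD.le
  have hpw : 0 < |p| * w := mul_pos (abs_pos.2 hp) hw
  have hquad : ∀ t x : ℝ, 2 * p * x = k - 2 * r * t →
      4 * (r ^ 2 - p ^ 2) * (t * t) + -4 * k * r * t + (k ^ 2 + 4 * p ^ 2) =
        4 * p ^ 2 * (x ^ 2 + 1 - t ^ 2) := by
    intro t x hx
    linear_combination (-(2 * p * x + k - 2 * r * t)) * hx
  have hdiscrim : discrim (4 * (r ^ 2 - p ^ 2)) (-4 * k * r) (k ^ 2 + 4 * p ^ 2) =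
      (4 * |p| * w) * (4 * |p| * w) := by
    rw [discrim]
    linear_combination (-16 * p ^ 2) * hw2 - 16 * w ^ 2 * sq_abs p
  have hb : -4 * k * r < 4 * |p| * w := by
    rcases hseg with hpr | hq
    · have hpr' : r ^ 2 < p ^ 2 := by nlinarith [sq_abs p]
      refine (abs_lt_of_sq_lt_sq' ?_ (by positivity)).2
      nlinarith [sq_abs p, sq_nonneg k]
    · have hk : 0 < k := by
        rcases le_or_gt 0 q with hq0 | hq0
        · rw [abs_of_nonneg hq0] at hq; nlinarith
        · rw [abs_of_neg hq0] at hq; nlinarith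
      nlinarith
  obtain ⟨r', hr', hroot, hvertex, hleast⟩ :=
    exists_least_pos_root_of_discrim (by positivity) (by positivity) hdiscrim hb
  obtain ⟨x, hx⟩ : ∃ x, 2 * p * x = k - 2 * r * r' := ⟨(k - 2 * r * r') / (2 * p), by field_simp⟩
  have hxr' : x ^ 2 + 1 = r' ^ 2 := by
    have h := (hquad r' x hx).symm.trans hroot
    have hp2 : 4 * p ^ 2 ≠ 0 := by positivity
    linear_combination (mul_eq_zero.1 h).resolve_left hp2
  refine ⟨r', x, hr', by linear_combination hx, hxr', fun r'' x'' hr'' hx'' hx''r'' => ?_, ?_⟩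
  · refine hleast r'' hr'' ?_
    rw [hquad r'' x'' (by linear_combination hx''), hx''r'', sub_self, mul_zero]
  · have h2 : 2 * (p * (r * x + p * r')) = |p| * w := by
      linear_combination r * hx - hvertex / 4
    linarith

theorem dist_sq_eq_fin_two (X Y : Pt) : dist X Y ^ 2 = (X 0 - Y 0) ^ 2 + (X 1 - Y 1) ^ 2 := by
  rw [EuclideanSpace.dist_eq, sq_sqrt (by positivity), Fin.sum_univ_two, Real.dist_eq,
    Real.dist_eq, sq_abs, sq_abs]

theorem cos_angle_eq_div_dist_mul_dist (Q : Pt) :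
    cos (∠ !₂[0, -1] Q !₂[0, 1]) =
      (Q 0 ^ 2 + Q 1 ^ 2 - 1) / (dist !₂[0, -1] Q * dist !₂[0, 1] Q) := by
  rw [angle, InnerProductGeometry.cos_angle, ← dist_eq_norm_vsub, ← dist_eq_norm_vsub]
  congr 1
  simp [PiLp.inner_apply, Fin.sum_univ_two]
  ring

theorem dist_mul_dist_sq (Q : Pt) :
    (dist !₂[0, -1] Q * dist !₂[0, 1] Q) ^ 2 = (Q 0 ^ 2 + Q 1 ^ 2 - 1) ^ 2 + 4 * Q 0 ^ 2 := by
  rw [mul_pow, dist_sq_eq_fin_two, dist_sq_eq_fin_two]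
  simp
  ring

theorem dist_sq_axis_point (c : ℝ) (Q : Pt) :
    dist !₂[c, 0] Q ^ 2 = (Q 0 ^ 2 + Q 1 ^ 2 - 1) - 2 * c * Q 0 + (c ^ 2 + 1) := by
  rw [dist_sq_eq_fin_two]
  simp
  ring

/-- Inequality between `l / √(l² + 1)` and `S / √(S² + 4w²)`, cleared of denominators. -/
theorem mul_lt_mul_of_two_mul_lt {l ρ S m w : ℝ} (hw : 0 ≤ w) (hρ : 0 < ρ)
    (hρl : ρ ^ 2 = l ^ 2 + 1) (hm : 0 ≤ m) (hm2 : m ^ 2 = S ^ 2 + 4 * w ^ 2) (h : 2 * l * w < S) :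
    l * m < ρ * S := by
  have hdiff : (ρ * S) ^ 2 - (l * m) ^ 2 = (S - 2 * l * w) * (S + 2 * l * w) := by
    linear_combination S ^ 2 * hρl - l ^ 2 * hm2
  rcases le_or_gt S 0 with hS | hS
  · have hl : l < 0 := by nlinarith
    have hw0 : 0 < w := by nlinarith
    have hlm : l * m < 0 := mul_neg_of_neg_of_pos hl (by nlinarith)
    have hsq : (ρ * S) ^ 2 < (-(l * m)) ^ 2 := by nlinarith
    linarith [(abs_lt_of_sq_lt_sq' hsq (by linarith)).1]
  · rcases le_or_gt l 0 with hl | hl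
    · nlinarith [mul_nonpos_of_nonpos_of_nonneg hl hm]
    · have hsq : (l * m) ^ 2 < (ρ * S) ^ 2 := by nlinarith [mul_nonneg hw hl.le]
      exact (abs_lt_of_sq_lt_sq' hsq (by positivity)).2

theorem lt_cos_angle {l ρ : ℝ} {Q : Pt} (hρ : 0 < ρ) (hρl : ρ ^ 2 = l ^ 2 + 1)
    (hQ : 0 < dist !₂[0, -1] Q * dist !₂[0, 1] Q) (h : 2 * l * |Q 0| < Q 0 ^ 2 + Q 1 ^ 2 - 1) :
    l / ρ < cos (∠ !₂[0, -1] Q !₂[0, 1]) := by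
  rw [cos_angle_eq_div_dist_mul_dist, div_lt_div_iff₀ hρ hQ, mul_comm _ ρ]
  exact mul_lt_mul_of_two_mul_lt (abs_nonneg _) hρ hρl hQ.le
    (by rw [dist_mul_dist_sq, sq_abs]) h

theorem cos_angle_eq_of_dist_axis_point {x ρ ε : ℝ} {T : Pt} (hρ : 0 < ρ) (hxρ : x ^ 2 + 1 = ρ ^ 2)
    (hT : dist !₂[x, 0] T = ρ) (hε : |ε| = 1) (hεT : 0 < ε * T 0) :
    cos (∠ !₂[0, -1] T !₂[0, 1]) = ε * x / ρ := by
  have hε2 : ε ^ 2 = 1 := by rw [← sq_abs, hε, one_pow]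
  have hS : T 0 ^ 2 + T 1 ^ 2 - 1 = 2 * x * T 0 := by
    linear_combination -dist_sq_axis_point x T + (by rw [hT] : dist !₂[x, 0] T ^ 2 = ρ ^ 2) - hxρ
  have hm : dist !₂[0, -1] T * dist !₂[0, 1] T = 2 * (ε * T 0) * ρ := by
    rw [← sq_eq_sq₀ (by positivity) (by positivity), dist_mul_dist_sq, hS]
    linear_combination (4 * T 0 ^ 2) * hxρ - (4 * T 0 ^ 2 * ρ ^ 2) * hε2
  rw [cos_angle_eq_div_dist_mul_dist, hm, hS, div_eq_div_iff (by positivity) hρ.ne']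
  linear_combination (-(2 * x * T 0 * ρ)) * hε2

theorem two_mul_mul_abs_lt {x u S : ℝ} (h : 2 * x * u < S) (h' : 0 < x → -(2 * x * u) < S) :
    2 * x * |u| < S := by
  rcases le_or_gt 0 u with hu | hu
  · rwa [abs_of_nonneg hu]
  · rw [abs_of_neg hu]
    rcases le_or_gt x 0 with hx | hx
    · nlinarith
    · linarith [h' hx]

theorem lt_abs_or_one_lt_abs_of_disjoint {P : Pt} {r : ℝ}
    (hdisj : Disjoint (segment ℝ !₂[0, -1] !₂[0, 1]) (Metric.closedBall P r)) :
    r < |P 0| ∨ 1 < |P 1| := by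
  refine (le_or_gt |P 1| 1).imp_left fun hq => ?_
  have hfoot : !₂[0, P 1] ∈ segment ℝ !₂[0, -1] !₂[0, 1] := by
    obtain ⟨hq₁, hq₂⟩ := abs_le.1 hq
    refine ⟨(1 - P 1) / 2, (1 + P 1) / 2, by linarith, by linarith, by ring, ?_⟩
    ext i
    fin_cases i <;> simp; ring
  have hdist : dist !₂[0, P 1] P = |P 0| := by
    rw [EuclideanSpace.dist_eq]
    simp [Fin.sum_univ_two, sqrt_sq_eq_abs]
  simpa [hdist] using Set.disjoint_left.1 hdisj hfoot

theorem dist_axis_point_eq_of_forall_angle_le {P Pstar : Pt} {r r' x : ℝ} (hr : 0 < r) (hr' : 0 < r')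
    (hxr' : x ^ 2 + 1 = r' ^ 2) (hOP : dist !₂[x, 0] P = r + r')
    (hside : 0 < P 0 * (r * x + P 0 * r'))
    (hAP : r < dist !₂[0, -1] P) (hBP : r < dist !₂[0, 1] P)
    (hmem : Pstar ∈ Metric.closedBall P r)
    (hmax : ∀ Q ∈ Metric.closedBall P r, ∠ !₂[0, -1] Q !₂[0, 1] ≤ ∠ !₂[0, -1] Pstar !₂[0, 1]) :
    dist !₂[x, 0] Pstar = r' := by
  rw [Metric.mem_closedBall] at hmem
  have hrr' : 0 < r + r' := by positivity
  set O : Pt := !₂[x, 0]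
  set T : Pt := AffineMap.lineMap O P (r' / (r + r'))
  have hOT : dist O T = r' := by
    rw [dist_left_lineMap, hOP, Real.norm_eq_abs, abs_of_pos (by positivity)]
    field_simp
  have hTP : dist T P = r := by
    rw [dist_lineMap_right, hOP, Real.norm_eq_abs, abs_of_pos (by field_simp; linarith)]
    field_simp
    ring
  have hT0 : T 0 * (r + r') = r * x + P 0 * r' := by
    simp [T, O, AffineMap.lineMap_apply_module]
    field_simp
    ring
  obtain ⟨ε, hε, hεP⟩ : ∃ ε : ℝ, |ε| = 1 ∧ 0 < ε * P 0 := by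
    have hP0 : P 0 ≠ 0 := by rintro h; simp [h] at hside
    rcases hP0.lt_or_gt with h | h
    · exact ⟨-1, by simp, by linarith⟩
    · exact ⟨1, by simp, by linarith⟩
  have hε2 : ε * ε = 1 := by rw [← abs_mul_abs_self, hε, one_mul]
  have hεT : 0 < ε * T 0 := by
    have h : ε * T 0 * ((r + r') * (ε * P 0)) = P 0 * (r * x + P 0 * r') := by
      linear_combination (ε * ε * P 0) * hT0 + P 0 * (r * x + P 0 * r') * hε2
    exact (pos_iff_pos_of_mul_pos (h ▸ hside)).2 (by positivity)
  have hcosT := cos_angle_eq_of_dist_axis_point hr' hxr' hOT hε hεT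
  have hOPstar : r' ≤ dist O Pstar := by linarith [dist_triangle O Pstar P]
  by_contra hne
  have hout : 2 * (ε * x) * (ε * Pstar 0) < Pstar 0 ^ 2 + Pstar 1 ^ 2 - 1 := by
    have h := pow_lt_pow_left₀ (lt_of_le_of_ne hOPstar (Ne.symm hne)) hr'.le two_ne_zero
    rw [dist_sq_axis_point] at h
    linear_combination h + hxr' + (2 * x * Pstar 0) * hε2
  -- the mirror centre `(-x, 0)` is then farther than `r + r'` from `P`
  have hout' : 0 < ε * x → -(2 * (ε * x) * (ε * Pstar 0)) < Pstar 0 ^ 2 + Pstar 1 ^ 2 - 1 := by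
    intro hεx
    have hxP : 0 < x * P 0 := by linear_combination mul_pos hεx hεP + (x * P 0) * hε2
    have hO'P : r + r' < dist !₂[-x, 0] P := by
      refine lt_of_pow_lt_pow_left₀ 2 dist_nonneg ?_
      rw [← hOP, dist_sq_axis_point, dist_sq_axis_point]
      linarith
    have h := pow_lt_pow_left₀ (by linarith [dist_triangle !₂[-x, 0] Pstar P] :
      r' < dist !₂[-x, 0] Pstar) hr'.le two_ne_zero
    rw [dist_sq_axis_point] at h
    linear_combination h + hxr' - (2 * x * Pstar 0) * hε2
  have hstrict := two_mul_mul_abs_lt hout hout'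
  rw [abs_mul, hε, one_mul] at hstrict
  have hApos : 0 < dist !₂[0, -1] Pstar * dist !₂[0, 1] Pstar :=
    mul_pos (by linarith [dist_triangle !₂[0, -1] Pstar P])
      (by linarith [dist_triangle !₂[0, 1] Pstar P])
  have hlt := lt_cos_angle hr' (by linear_combination -hxr' - x ^ 2 * hε2) hApos hstrict
  have hle := cos_le_cos_of_nonneg_of_le_pi (angle_nonneg _ _ _) (angle_le_pi _ _ _)
    (hmax T (Metric.mem_closedBall.2 hTP.le))
  linarith

/-- The maximum angle problem reduces to a quadratic equation: with
`A = (0,-1)`, `B = (0,1)`, there are `r' > 0` and `x` satisfying the system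
`2 Pₓ x = Pₓ² + P_y² − 2 r' r − r² − 1`, `x² + 1 = r'²`,
`(x − Pₓ)² + P_y² = (r + r')²`, where `r'` is the smallest such positive root,
and the maximizer `P*` of `∠ A Q B` over the disk is the intersection of the
boundary circle with segment `O P`, where `O = (x, 0)`. -/
theorem stmt3 (A B P Pstar : Pt) (r : ℝ) (hr : 0 < r)
    (hA0 : A 0 = 0) (hA1 : A 1 = -1) (hB0 : B 0 = 0) (hB1 : B 1 = 1)
    (hPx : P 0 ≠ 0)
    (hAP : dist A P > r) (hBP : dist B P > r)
    (hdisj : Disjoint (segment ℝ A B) (Metric.closedBall P r))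
    (hmem : Pstar ∈ Metric.closedBall P r)
    (hmax : ∀ Q ∈ Metric.closedBall P r, ∠ A Q B ≤ ∠ A Pstar B) :
    ∃ r' x : ℝ, 0 < r' ∧
      2 * P 0 * x = (P 0) ^ 2 + (P 1) ^ 2 - 2 * r' * r - r ^ 2 - 1 ∧
      x ^ 2 + 1 = r' ^ 2 ∧
      (x - P 0) ^ 2 + (P 1) ^ 2 = (r + r') ^ 2 ∧
      (∀ r'' x'' : ℝ, 0 < r'' →
        2 * P 0 * x'' = (P 0) ^ 2 + (P 1) ^ 2 - 2 * r'' * r - r ^ 2 - 1 →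
        x'' ^ 2 + 1 = r'' ^ 2 →
        (x'' - P 0) ^ 2 + (P 1) ^ 2 = (r + r'') ^ 2 → r' ≤ r'') ∧
      ∃ O : Pt, O 0 = x ∧ O 1 = 0 ∧
        dist Pstar P = r ∧ Pstar ∈ segment ℝ O P := by
  have hA : r ^ 2 < P 0 ^ 2 + (P 1 + 1) ^ 2 := by
    have h := pow_lt_pow_left₀ hAP hr.le two_ne_zero
    rw [dist_sq_eq_fin_two, hA0, hA1] at h
    linear_combination h
  have hB : r ^ 2 < P 0 ^ 2 + (P 1 - 1) ^ 2 := by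
    have h := pow_lt_pow_left₀ hBP hr.le two_ne_zero
    rw [dist_sq_eq_fin_two, hB0, hB1] at h
    linear_combination h
  obtain rfl : A = !₂[0, -1] := by ext i; fin_cases i <;> simp [hA0, hA1]
  obtain rfl : B = !₂[0, 1] := by ext i; fin_cases i <;> simp [hB0, hB1]
  obtain ⟨r', x, hr', hx, hxr', hleast, hside⟩ :=
    exists_least_tangent_radius hPx hr hA hB (lt_abs_or_one_lt_abs_of_disjoint hdisj)
  have htangent : (x - P 0) ^ 2 + P 1 ^ 2 = (r + r') ^ 2 := by linear_combination hxr' - hx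
  have hOP : dist !₂[x, 0] P = r + r' := by
    rw [← sq_eq_sq₀ dist_nonneg (by positivity), dist_sq_eq_fin_two]
    simpa using htangent
  have hOPstar := dist_axis_point_eq_of_forall_angle_le hr hr' hxr' hOP hside hAP hBP hmem hmax
  have hPstarP : dist Pstar P = r := by
    linarith [dist_triangle !₂[x, 0] Pstar P, Metric.mem_closedBall.1 hmem]
  refine ⟨r', x, hr', hx, hxr', htangent,
    fun r'' x'' hr'' hx'' hx''r'' _ => hleast r'' x'' hr'' hx'' hx''r'', !₂[x, 0], by simp, by simp,
    hPstarP, ?_⟩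
  exact mem_segment_iff_wbtw.2 (dist_add_dist_eq_iff.1 (by linarith))
end

section
/- Let ABC be a triangle all of whose angles are strictly less than 120°. Then there exists a unique point F inside the triangle such that ∠AFB = ∠BFC = ∠CFA = 120°. -/
/-!
The Fermat point is the minimizer `F` of the total distance `x ↦ |xA| + |xB| + |xC|`, which exists
because the plane is proper. If the angle at a vertex is less than `2π/3`, moving off the vertex
along the bisector of its two sides decreases the total distance, so `F` is not a vertex. There the
first-order condition says that the unit vectors from `F` to the vertices sum to zero, which is
equivalent to the three angles at `F` being `2π/3`, and exhibits `F` as a combination of the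
vertices with positive weights, hence an interior point. Conversely, a point `G` whose unit
vectors sum to zero gives a lower bound for the total distance that `F` attains; the equality
cases of Cauchy–Schwarz then put every vertex on the line `FG`, so `F = G` since the triangle is
not degenerate.
-/

open EuclideanGeometry Real

open NormedSpace RealInnerProductSpace

theorem Real.two_pi_div_three_mem_Icc : 2 * π / 3 ∈ Set.Icc 0 π :=
  ⟨by positivity, by linarith [pi_pos]⟩

theorem Real.cos_two_pi_div_three : cos (2 * π / 3) = -(1 / 2) := by
  rw [show 2 * π / 3 = π - π / 3 by ring, cos_pi_sub, cos_pi_div_three]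

theorem exists_forall_sum_dist_le {ι X : Type*} [Fintype ι] [Nonempty ι] [PseudoMetricSpace X]
    [ProperSpace X] (p : ι → X) : ∃ F, ∀ x, ∑ i, dist (p i) F ≤ ∑ i, dist (p i) x := by
  obtain ⟨i₀⟩ := ‹Nonempty ι›
  have : Nonempty X := ⟨p i₀⟩
  refine (continuous_finsetSum _ fun i _ => continuous_const.dist continuous_id).exists_forall_le
    (Filter.tendsto_atTop_mono (fun x => ?_) (tendsto_dist_left_cocompact_atTop (p i₀)))
  exact Finset.single_le_sum (f := fun i => dist (p i) x) (fun i _ => dist_nonneg)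
    (Finset.mem_univ i₀)

section InnerProductSpace

variable {E : Type*} [NormedAddCommGroup E] [InnerProductSpace ℝ E]

theorem inner_normalize_self (x : E) : ⟪normalize x, x⟫ = ‖x‖ := by
  rw [NormedSpace.normalize, real_inner_smul_left, real_inner_self_eq_norm_sq]
  rcases eq_or_ne ‖x‖ 0 with hx | hx
  · simp [hx]
  · field_simp

theorem norm_normalize_le_one (x : E) : ‖normalize x‖ ≤ 1 := by
  rcases eq_or_ne x 0 with rfl | hx
  · simp [normalize_zero_eq_zero]
  · exact (norm_normalize_eq_one_iff.2 hx).le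

theorem inner_normalize_le_norm (x y : E) : ⟪normalize x, y⟫ ≤ ‖y‖ :=
  (real_inner_le_norm _ _).trans (mul_le_of_le_one_left (norm_nonneg y) (norm_normalize_le_one x))

theorem eq_norm_smul_normalize_of_inner_eq_norm {x y : E} (h : ⟪normalize x, y⟫ = ‖y‖) :
    y = ‖y‖ • normalize x := by
  rcases eq_or_ne x 0 with rfl | hx
  · rw [normalize_zero_eq_zero, inner_zero_left, eq_comm, norm_eq_zero] at h
    simp [h]
  · have hu : ‖normalize x‖ = 1 := norm_normalize_eq_one_iff.2 hx
    have := inner_eq_norm_mul_iff_real.1 (h.trans (by rw [hu, one_mul]))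
    rwa [hu, one_smul, eq_comm] at this

theorem InnerProductGeometry.cos_angle_eq_inner_normalize (x y : E) :
    cos (InnerProductGeometry.angle x y) = ⟪normalize x, normalize y⟫ := by
  rw [InnerProductGeometry.cos_angle, NormedSpace.normalize, NormedSpace.normalize,
    real_inner_smul_left, real_inner_smul_right]
  field_simp

theorem EuclideanGeometry.cos_angle_eq_inner_normalize (X P Y : E) :
    cos (∠ X P Y) = ⟪normalize (X - P), normalize (Y - P)⟫ :=
  InnerProductGeometry.cos_angle_eq_inner_normalize _ _

theorem EuclideanGeometry.angle_eq_two_pi_div_three_iff {X P Y : E} :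
    ∠ X P Y = 2 * π / 3 ↔ ⟪normalize (X - P), normalize (Y - P)⟫ = -(1 / 2) := by
  rw [← cos_angle_eq_inner_normalize, ← cos_two_pi_div_three]
  exact (injOn_cos.eq_iff ⟨angle_nonneg X P Y, angle_le_pi X P Y⟩
    two_pi_div_three_mem_Icc).symm

theorem EuclideanGeometry.angle_lt_two_pi_div_three_iff {X P Y : E} :
    ∠ X P Y < 2 * π / 3 ↔ -(1 / 2) < ⟪normalize (X - P), normalize (Y - P)⟫ := by
  rw [← cos_angle_eq_inner_normalize, ← cos_two_pi_div_three]
  exact (strictAntiOn_cos.lt_iff_gt two_pi_div_three_mem_Icc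
    ⟨angle_nonneg X P Y, angle_le_pi X P Y⟩).symm

theorem add_add_eq_zero_iff_inner_eq_neg_half {u v w : E} (hu : ‖u‖ = 1) (hv : ‖v‖ = 1)
    (hw : ‖w‖ = 1) :
    u + v + w = 0 ↔ ⟪u, v⟫ = -(1 / 2) ∧ ⟪v, w⟫ = -(1 / 2) ∧ ⟪w, u⟫ = -(1 / 2) := by
  have huu : ⟪u, u⟫ = 1 := by rw [real_inner_self_eq_norm_sq, hu, one_pow]
  have hvv : ⟪v, v⟫ = 1 := by rw [real_inner_self_eq_norm_sq, hv, one_pow]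
  have hww : ⟪w, w⟫ = 1 := by rw [real_inner_self_eq_norm_sq, hw, one_pow]
  have hvu := real_inner_comm u v
  have hwv := real_inner_comm v w
  have huw := real_inner_comm w u
  constructor
  · intro h
    have hu0 : ⟪u, u + v + w⟫ = 0 := by rw [h, inner_zero_right]
    have hv0 : ⟪v, u + v + w⟫ = 0 := by rw [h, inner_zero_right]
    have hw0 : ⟪w, u + v + w⟫ = 0 := by rw [h, inner_zero_right]
    simp only [inner_add_right] at hu0 hv0 hw0
    refine ⟨by linarith, by linarith, by linarith⟩
  · rintro ⟨huv, hvw, hwu⟩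
    rw [← inner_self_eq_zero (𝕜 := ℝ)]
    simp only [inner_add_left, inner_add_right]
    linarith

theorem EuclideanGeometry.angles_eq_two_pi_div_three_iff {A B C F : E} (hA : A ≠ F) (hB : B ≠ F)
    (hC : C ≠ F) :
    (∠ A F B = 2 * π / 3 ∧ ∠ B F C = 2 * π / 3 ∧ ∠ C F A = 2 * π / 3) ↔
      normalize (A - F) + normalize (B - F) + normalize (C - F) = 0 := by
  simp only [angle_eq_two_pi_div_three_iff]
  exact (add_add_eq_zero_iff_inner_eq_neg_half (norm_normalize_eq_one_iff.2 (sub_ne_zero.2 hA))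
    (norm_normalize_eq_one_iff.2 (sub_ne_zero.2 hB))
    (norm_normalize_eq_one_iff.2 (sub_ne_zero.2 hC))).symm

theorem EuclideanGeometry.left_ne_and_right_ne_of_angle_ne_pi_div_two {X P Y : E}
    (h : ∠ X P Y ≠ π / 2) : X ≠ P ∧ Y ≠ P := by
  constructor <;> rintro rfl <;> simp at h

theorem hasDerivAt_norm_add_smul {x : E} (hx : x ≠ 0) (v : E) :
    HasDerivAt (fun t : ℝ => ‖x + t • v‖) ⟪normalize x, v⟫ 0 := by
  have hline : HasDerivAt (fun t : ℝ => x + t • v) v 0 := by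
    simpa using ((hasDerivAt_id (0 : ℝ)).smul_const v).const_add x
  have hsq := hline.norm_sq.sqrt (by simpa using hx)
  simp only [zero_smul, add_zero, sqrt_sq (norm_nonneg _)] at hsq
  convert hsq using 1
  rw [NormedSpace.normalize, real_inner_smul_left]
  field_simp

theorem hasDerivAt_dist_add_smul {p P : E} (h : p ≠ P) (v : E) :
    HasDerivAt (fun t : ℝ => dist p (P + t • v)) (-⟪normalize (p - P), v⟫) 0 := by
  have := hasDerivAt_norm_add_smul (sub_ne_zero.2 h) (-v)
  rw [inner_neg_right] at this
  convert this using 2 with t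
  rw [dist_eq_norm, smul_neg, ← sub_eq_add_neg, sub_add_eq_sub_sub]

variable {ι : Type*} [Fintype ι]

theorem sum_normalize_eq_zero_of_forall_sum_dist_le {p : ι → E} {F : E} (hF : ∀ i, p i ≠ F)
    (hmin : ∀ x, ∑ i, dist (p i) F ≤ ∑ i, dist (p i) x) :
    ∑ i, normalize (p i - F) = 0 := by
  set g := ∑ i, normalize (p i - F)
  have hderiv : HasDerivAt (fun t : ℝ => ∑ i, dist (p i) (F + t • g)) (-⟪g, g⟫) 0 := by
    rw [sum_inner, ← Finset.sum_neg_distrib]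
    exact HasDerivAt.fun_sum fun i _ => hasDerivAt_dist_add_smul (hF i) g
  have hlocmin : IsLocalMin (fun t : ℝ => ∑ i, dist (p i) (F + t • g)) 0 :=
    Filter.Eventually.of_forall fun t => by simpa using hmin (F + t • g)
  simpa using hlocmin.hasDerivAt_eq_zero hderiv

/-- When the directions from `G` sum to zero, `∑ i, ⟪normalize (p i - G), p i - x⟫` is the constant
`∑ i, dist (p i) G` and bounds `∑ i, dist (p i) x` termwise (Cauchy–Schwarz); a minimizer `F`
attains it, so every Cauchy–Schwarz step is an equality. -/
theorem mem_affineSpan_pair_of_sum_normalize_eq_zero {p : ι → E} {F G : E}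
    (hG : ∑ i, normalize (p i - G) = 0) (hF : ∀ x, ∑ i, dist (p i) F ≤ ∑ i, dist (p i) x)
    (i : ι) : F ∈ line[ℝ, p i, G] := by
  have hle : ∀ i, ⟪normalize (p i - G), p i - F⟫ ≤ dist (p i) F := fun i => by
    rw [dist_eq_norm]; exact inner_normalize_le_norm _ _
  have hsum : ∑ i, ⟪normalize (p i - G), p i - F⟫ = ∑ i, dist (p i) G := by
    simp only [show ∀ i, p i - F = (p i - G) + (G - F) from fun i => by abel, inner_add_right,
      Finset.sum_add_distrib, ← sum_inner, hG, inner_zero_left, inner_normalize_self,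
      dist_eq_norm, add_zero]
  have heq : ⟪normalize (p i - G), p i - F⟫ = ‖p i - F‖ := by
    rw [← dist_eq_norm]
    exact (Finset.sum_eq_sum_iff_of_le fun i _ => hle i).1
      (le_antisymm (Finset.sum_le_sum fun i _ => hle i) (hsum ▸ hF G)) i (Finset.mem_univ i)
  have hpF := eq_norm_smul_normalize_of_inner_eq_norm heq
  rw [NormedSpace.normalize, smul_smul] at hpF
  convert AffineMap.lineMap_mem_affineSpan_pair (‖p i - F‖ * ‖p i - G‖⁻¹) (p i) G using 1
  rw [AffineMap.lineMap_apply, vsub_eq_sub, vadd_eq_add, ← neg_sub (p i) G, smul_neg, ← hpF]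
  abel

/-- Moving from `A` along `d = normalize (B - A) + normalize (C - A)` changes the total distance
at rate `‖d‖ - ‖d‖²`, which is negative because the angle condition gives `‖d‖ > 1`. -/
theorem ne_of_angle_lt_of_forall_sum_dist_le {A B C F : E} (hB : B ≠ A) (hC : C ≠ A)
    (h : ∠ B A C < 2 * π / 3)
    (hF : ∀ x, dist A F + dist B F + dist C F ≤ dist A x + dist B x + dist C x) : A ≠ F := by
  rintro rfl
  set d := normalize (B - A) + normalize (C - A) with hd_def
  have hd : 1 < ‖d‖ := by
    have huv := angle_lt_two_pi_div_three_iff.1 h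
    have hsq : ‖d‖ ^ 2 = 2 + 2 * ⟪normalize (B - A), normalize (C - A)⟫ := by
      rw [hd_def, norm_add_sq_real, norm_normalize_eq_one_iff.2 (sub_ne_zero.2 hB),
        norm_normalize_eq_one_iff.2 (sub_ne_zero.2 hC)]
      ring
    nlinarith [norm_nonneg d]
  have hself : HasDerivWithinAt (fun t : ℝ => dist A (A + t • d)) ‖d‖ (Set.Ici 0) 0 :=
    (hasDerivAt_mul_const ‖d‖).hasDerivWithinAt.congr_of_mem
      (fun t (ht : 0 ≤ t) => by simp [norm_smul, abs_of_nonneg ht]) Set.self_mem_Ici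
  have hderiv : HasDerivWithinAt
      (fun t : ℝ => dist A (A + t • d) + dist B (A + t • d) + dist C (A + t • d))
      (‖d‖ - ‖d‖ ^ 2) (Set.Ici 0) 0 := by
    refine ((hself.add (hasDerivAt_dist_add_smul hB d).hasDerivWithinAt).add
      (hasDerivAt_dist_add_smul hC d).hasDerivWithinAt).congr_deriv ?_
    rw [← real_inner_self_eq_norm_sq, hd_def, inner_add_left]
    ring
  obtain ⟨t, hslope, ht⟩ := ((hderiv.liminf_right_slope_le (r := 0) (by nlinarith)).and_eventually
    self_mem_nhdsWithin).exists
  have hdec := (slope_neg_iff_of_le ht.le).1 hslope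
  simp only [zero_smul, add_zero] at hdec
  exact hdec.not_ge (hF _)

theorem eq_of_sum_normalize_eq_zero_of_not_collinear {p : ι → E} {F G : E}
    (hp : ¬ Collinear ℝ (Set.range p)) (hG : ∑ i, normalize (p i - G) = 0)
    (hF : ∀ x, ∑ i, dist (p i) F ≤ ∑ i, dist (p i) x) : F = G := by
  by_contra hFG
  refine hp ((collinear_iff_exists_forall_eq_smul_vadd _).2 ⟨F, G - F, ?_⟩)
  rintro _ ⟨i, rfl⟩
  have hline : p i ∈ line[ℝ, F, G] :=
    (collinear_insert_of_mem_affineSpan_pair (mem_affineSpan_pair_of_sum_normalize_eq_zero hG hF i)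
      ).mem_affineSpan_of_mem_of_ne (by simp) (by simp) (by simp) hFG
  obtain ⟨r, hr⟩ := mem_affineSpan_pair_iff_exists_lineMap_eq.1 hline
  exact ⟨r, by rw [← hr, AffineMap.lineMap_apply, vsub_eq_sub]⟩

end InnerProductSpace

theorem AffineBasis.mem_interior_convexHull_of_sum_smul_sub_eq_zero {ι V : Type*} [Fintype ι]
    [NormedAddCommGroup V] [NormedSpace ℝ V] (b : AffineBasis ι ℝ V) {c : ι → ℝ}
    (hc : ∀ i, 0 < c i) {F : V} (h : ∑ i, c i • (b i - F) = 0) :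
    F ∈ interior (convexHull ℝ (Set.range b)) := by
  have := b.nonempty
  set s := ∑ i, c i
  have hs : 0 < s := Finset.sum_pos (fun i _ => hc i) Finset.univ_nonempty
  have hw : ∑ i, c i / s = 1 := by rw [← Finset.sum_div, div_self hs.ne']
  have hF : Finset.univ.affineCombination ℝ b (fun i => c i / s) = F := by
    rw [Finset.univ.affineCombination_eq_weightedVSubOfPoint_vadd_of_sum_eq_one _ _ hw F,
      Finset.weightedVSubOfPoint_apply]
    simp only [div_eq_inv_mul, mul_smul, ← Finset.smul_sum, vsub_eq_sub, h, smul_zero, zero_vadd]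
  rw [b.interior_convexHull]
  intro i
  rw [← hF, b.coord_apply_combination_of_mem (Finset.mem_univ i) hw]
  exact div_pos (hc i) hs

theorem mem_interior_convexHull_triangle_of_smul_sub_add_eq_zero {V : Type*}
    [NormedAddCommGroup V] [NormedSpace ℝ V] [Fact (Module.finrank ℝ V = 2)] {A B C F : V}
    (hABC : ¬ Collinear ℝ ({A, B, C} : Set V)) {a b c : ℝ} (ha : 0 < a) (hb : 0 < b) (hc : 0 < c)
    (h : a • (A - F) + b • (B - F) + c • (C - F) = 0) :
    F ∈ interior (convexHull ℝ ({A, B, C} : Set V)) := by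
  have : FiniteDimensional ℝ V := .of_fact_finrank_eq_two
  have hind : AffineIndependent ℝ ![A, B, C] := affineIndependent_iff_not_collinear_set.2 hABC
  have htop : affineSpan ℝ (Set.range ![A, B, C]) = ⊤ := by
    rw [hind.affineSpan_eq_top_iff_card_eq_finrank_add_one, Fact.out (p := Module.finrank ℝ V = 2)]
    simp
  have hrange : Set.range ![A, B, C] = {A, B, C} := by
    rw [Matrix.range_cons, Matrix.range_cons_cons_empty, Set.singleton_union]
  rw [← hrange]
  exact AffineBasis.mem_interior_convexHull_of_sum_smul_sub_eq_zero ⟨_, hind, htop⟩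
    (c := ![a, b, c]) (by simp [Fin.forall_fin_succ, ha, hb, hc]) (by simpa [Fin.sum_univ_three])

/-- If all angles of a triangle `ABC` are strictly less than `120°`, then there
exists a unique point `F` inside the triangle with
`∠AFB = ∠BFC = ∠CFA = 120°` (the Fermat point). -/
theorem stmt4 (A B C : Pt) (hncol : ¬ Collinear ℝ ({A, B, C} : Set Pt))
    (hA : ∠ B A C < 2 * π / 3) (hB : ∠ A B C < 2 * π / 3)
    (hC : ∠ B C A < 2 * π / 3) :
    ∃! F : Pt, F ∈ interior (convexHull ℝ ({A, B, C} : Set Pt)) ∧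
      ∠ A F B = 2 * π / 3 ∧ ∠ B F C = 2 * π / 3 ∧ ∠ C F A = 2 * π / 3 := by
  have hAB := ne₁₂_of_not_collinear hncol
  have hAC := ne₁₃_of_not_collinear hncol
  have hBC := ne₂₃_of_not_collinear hncol
  obtain ⟨F, hmin⟩ := exists_forall_sum_dist_le ![A, B, C]
  have hmin₃ : ∀ x, dist A F + dist B F + dist C F ≤ dist A x + dist B x + dist C x := by
    simpa [Fin.sum_univ_three] using hmin
  have hFA := ne_of_angle_lt_of_forall_sum_dist_le hAB.symm hAC.symm hA hmin₃
  have hFB := ne_of_angle_lt_of_forall_sum_dist_le hAB hBC.symm hB fun x => by linarith [hmin₃ x]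
  have hFC := ne_of_angle_lt_of_forall_sum_dist_le hBC hAC hC fun x => by linarith [hmin₃ x]
  have hF : normalize (A - F) + normalize (B - F) + normalize (C - F) = 0 := by
    have hpF : ∀ i, ![A, B, C] i ≠ F := by simp [Fin.forall_fin_succ, hFA, hFB, hFC]
    simpa [Fin.sum_univ_three] using sum_normalize_eq_zero_of_forall_sum_dist_le hpF hmin
  refine ⟨F, ⟨?_, (angles_eq_two_pi_div_three_iff hFA hFB hFC).2 hF⟩, ?_⟩
  · have : Fact (Module.finrank ℝ Pt = 2) := ⟨finrank_euclideanSpace_fin⟩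
    exact mem_interior_convexHull_triangle_of_smul_sub_add_eq_zero hncol
      (inv_pos.2 (dist_pos.2 hFA)) (inv_pos.2 (dist_pos.2 hFB)) (inv_pos.2 (dist_pos.2 hFC)) hF
  rintro G ⟨-, hG⟩
  have hne : 2 * π / 3 ≠ π / 2 := by linarith [pi_pos]
  obtain ⟨hGA, hGB⟩ := left_ne_and_right_ne_of_angle_ne_pi_div_two (hG.1.trans_ne hne)
  have hGC := (left_ne_and_right_ne_of_angle_ne_pi_div_two (hG.2.2.trans_ne hne)).1
  refine (eq_of_sum_normalize_eq_zero_of_not_collinear (p := ![A, B, C]) ?_ ?_ hmin).symm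
  · rwa [Matrix.range_cons, Matrix.range_cons_cons_empty, Set.singleton_union]
  · simpa [Fin.sum_univ_three] using (angles_eq_two_pi_div_three_iff hGA hGB hGC).1 hG
end

section
/- Let ABC be a triangle with ∠ACB ≥ 120°. Then C minimizes the function Q ↦ |AQ| + |BQ| + |CQ| over all points Q in the plane. -/
/-!
Let `u`, `v` be the unit vectors pointing from `C` to `A` and to `B`. Since the distance to a
point is convex with gradient `-u` at `C`, we have `|AQ| ≥ |AC| - ⟪Q - C, u⟫` and likewise for `B`.
An angle of at least `120°` means `⟪u, v⟫ ≤ -1/2`, i.e. `‖u + v‖ ≤ 1`, so the linear terms are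
absorbed by `|CQ| ≥ ⟪Q - C, u + v⟫`.
-/

open EuclideanGeometry Real RealInnerProductSpace

section

variable {V P : Type*} [NormedAddCommGroup V] [InnerProductSpace ℝ V] [MetricSpace P]
  [NormedAddTorsor V P]

theorem norm_add_le_one_of_two_pi_div_three_le_angle {u v : V} (hu : ‖u‖ = 1) (hv : ‖v‖ = 1)
    (h : 2 * π / 3 ≤ InnerProductGeometry.angle u v) : ‖u + v‖ ≤ 1 := by
  have hinner : ⟪u, v⟫ ≤ -(1 / 2) :=
    calc ⟪u, v⟫ = cos (InnerProductGeometry.angle u v) := by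
          simp [← InnerProductGeometry.cos_angle_mul_norm_mul_norm, hu, hv]
      _ ≤ cos (2 * π / 3) :=
          cos_le_cos_of_nonneg_of_le_pi (by positivity) (InnerProductGeometry.angle_le_pi u v) h
      _ = -(1 / 2) := by rw [show 2 * π / 3 = π - π / 3 by ring, cos_pi_sub, cos_pi_div_three]
  nlinarith [norm_add_sq_real u v, norm_nonneg (u + v)]

theorem ne_of_pi_div_two_lt_angle {a b c : P} (h : π / 2 < ∠ a c b) : a ≠ c ∧ b ≠ c := by
  constructor <;> rintro rfl <;> simp at h

-- Junk value `0` when `p = c`.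
variable (V) in
noncomputable def unitDir (p c : P) : V := ‖p -ᵥ c‖⁻¹ • (p -ᵥ c)

theorem norm_unitDir {p c : P} (h : p ≠ c) : ‖unitDir V p c‖ = 1 :=
  norm_smul_inv_norm (vsub_ne_zero.2 h)

theorem angle_unitDir_unitDir {a b c : P} (hac : a ≠ c) (hbc : b ≠ c) :
    InnerProductGeometry.angle (unitDir V a c) (unitDir V b c) = ∠ a c b := by
  rw [unitDir, unitDir,
    InnerProductGeometry.angle_smul_left_of_pos _ _ (by simpa using hac),
    InnerProductGeometry.angle_smul_right_of_pos _ _ (by simpa using hbc)]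
  rfl

theorem norm_unitDir_le_one (p c : P) : ‖unitDir V p c‖ ≤ 1 := by
  rw [unitDir, norm_smul, norm_inv, norm_norm]
  exact inv_mul_le_one_of_le₀ le_rfl (norm_nonneg _)

theorem inner_unitDir_self (p c : P) : ⟪p -ᵥ c, unitDir V p c⟫ = dist p c := by
  rw [unitDir, real_inner_smul_right, real_inner_self_eq_norm_sq, dist_eq_norm_vsub V]
  rcases eq_or_ne ‖p -ᵥ c‖ 0 with h | h
  · simp [h]
  · field_simp

theorem dist_sub_inner_unitDir_le_dist (p c q : P) :
    dist p c - ⟪q -ᵥ c, unitDir V p c⟫ ≤ dist p q := by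
  calc dist p c - ⟪q -ᵥ c, unitDir V p c⟫ = ⟪p -ᵥ q, unitDir V p c⟫ := by
        rw [← vsub_sub_vsub_cancel_right p q c, inner_sub_left, inner_unitDir_self]
    _ ≤ ‖p -ᵥ q‖ * ‖unitDir V p c‖ := real_inner_le_norm _ _
    _ ≤ dist p q := by
        rw [← dist_eq_norm_vsub V]
        exact mul_le_of_le_one_right dist_nonneg (norm_unitDir_le_one p c)

theorem dist_add_dist_le_of_norm_unitDir_add_unitDir_le_one {a b c : P} (q : P)
    (h : ‖unitDir V a c + unitDir V b c‖ ≤ 1) :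
    dist a c + dist b c ≤ dist a q + dist b q + dist c q := by
  have hcq : ⟪q -ᵥ c, unitDir V a c + unitDir V b c⟫ ≤ dist c q :=
    calc _ ≤ ‖q -ᵥ c‖ * ‖unitDir V a c + unitDir V b c‖ := real_inner_le_norm _ _
      _ ≤ dist c q := by
        rw [dist_comm, dist_eq_norm_vsub V]
        exact mul_le_of_le_one_right (norm_nonneg _) h
  rw [inner_add_right] at hcq
  linarith [dist_sub_inner_unitDir_le_dist a c q, dist_sub_inner_unitDir_le_dist b c q]

end

theorem stmt6_general (A B C : Pt)
    (hC : 2 * π / 3 ≤ ∠ A C B) :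
    ∀ Q : Pt, dist A C + dist B C + dist C C ≤ dist A Q + dist B Q + dist C Q := by
  intro Q
  obtain ⟨hAC, hBC⟩ := ne_of_pi_div_two_lt_angle (lt_of_lt_of_le (by linarith [pi_pos]) hC)
  have hsum := norm_add_le_one_of_two_pi_div_three_le_angle (norm_unitDir hAC) (norm_unitDir hBC)
    (by rwa [angle_unitDir_unitDir hAC hBC])
  rw [dist_self, add_zero]
  exact dist_add_dist_le_of_norm_unitDir_add_unitDir_le_one Q hsum

/-- If the angle of triangle `ABC` at `C` is at least `120°`, then `C`
minimizes `Q ↦ |AQ| + |BQ| + |CQ|` over the plane. -/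
theorem stmt6 (A B C : Pt) (hncol : ¬ Collinear ℝ ({A, B, C} : Set Pt))
    (hC : 2 * π / 3 ≤ ∠ A C B) :
    ∀ Q : Pt, dist A C + dist B C + dist C C ≤ dist A Q + dist B Q + dist C Q :=
  stmt6_general A B C hC
end

section
/- Let A, B, C be points in counterclockwise order around a point Q, and suppose the three angles ∠AQB, ∠BQC, ∠CQA sum to 2π. If Q' is any point in the intersection of the open disks bounded by the circumcircle of A, B, Q and the circumcircle of B, C, Q, then ∠AQ'B > ∠AQB and ∠BQ'C > ∠BQC. -/
open EuclideanGeometry Real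

/-!
Extend the ray from `A` through `Q'` to meet the circle through `A, B, Q` again at `P`. Since `Q'`
is inside the circle, it lies strictly between `A` and `P`, so `P` is on the same side of `AB` as
`Q` and the inscribed angle theorem gives `∠AQB = ∠APB`. By the exterior angle theorem in the
triangle `Q'BP`, `∠AQ'B = ∠APB + ∠Q'BP > ∠APB`.
-/

namespace EuclideanGeometry

variable {V P : Type*} [NormedAddCommGroup V] [InnerProductSpace ℝ V] [MetricSpace P]
  [NormedAddTorsor V P]

theorem angle_lt_angle_of_sbtw_s9 {a b q p : P} (h : Sbtw ℝ a q p)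
    (hncol : ¬ Collinear ℝ ({a, q, b} : Set P)) : ∠ a p b < ∠ a q b := by
  have hexterior : ∠ b q a = ∠ q b p + ∠ b p q := exterior_angle_eq_angle_add_angle a h
  have hray : ∠ b p q = ∠ b p a := h.symm.angle_eq_right b
  have hpos : 0 < ∠ q b p := by
    refine angle_pos_of_not_collinear fun hcol => hncol ?_
    have hb_mem : b ∈ line[ℝ, p, q] :=
      hcol.mem_affineSpan_of_mem_of_ne (by simp) (by simp) (by simp) h.ne_right.symm
    have ha_mem : a ∈ line[ℝ, p, q] := h.symm.wbtw.right_mem_affineSpan_of_left_ne h.ne_right.symm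
    exact collinear_triple_of_mem_affineSpan_pair ha_mem (right_mem_affineSpan_pair ℝ p q) hb_mem
  rw [angle_comm a p b, angle_comm a q b]
  linarith

variable [Fact (Module.finrank ℝ V = 2)]

theorem Sphere.angle_eq_of_sSameSide {s : Sphere P} {a b p q : P} (ha : a ∈ s) (hb : b ∈ s)
    (hp : p ∈ s) (hq : q ∈ s) (hpq : line[ℝ, a, b].SSameSide p q) : ∠ a p b = ∠ a q b := by
  have hpa : p ≠ a := fun h => hpq.left_notMem (h ▸ left_mem_affineSpan_pair ℝ a b)
  have hpb : p ≠ b := fun h => hpq.left_notMem (h ▸ right_mem_affineSpan_pair ℝ a b)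
  have hqa : q ≠ a := fun h => hpq.right_notMem (h ▸ left_mem_affineSpan_pair ℝ a b)
  have hqb : q ≠ b := fun h => hpq.right_notMem (h ▸ right_mem_affineSpan_pair ℝ a b)
  by_cases hab : a = b
  · subst hab
    rw [angle_self_of_ne hpa.symm, angle_self_of_ne hqa.symm]
  have : FiniteDimensional ℝ V := .of_fact_finrank_eq_two
  have : Module.Oriented ℝ V (Fin 2) :=
    ⟨Module.Basis.orientation (Module.finBasisOfFinrankEq _ _ Fact.out)⟩
  have hsign : (∡ a p b).sign = (∡ a q b).sign :=
    (hpq.oangle_sign_eq (left_mem_affineSpan_pair ℝ a b) (right_mem_affineSpan_pair ℝ a b)).symm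
  have hsign_ne_zero : (∡ a p b).sign ≠ 0 := by
    rw [Ne, oangle_sign_eq_zero_iff_collinear]
    exact fun hcol => hpq.left_notMem
      (hcol.mem_affineSpan_of_mem_of_ne (by simp) (by simp) (by simp) hab)
  -- Twice the oriented angles agree mod `2π`; equal signs rule out a difference of `π`.
  rw [angle_eq_iff_oangle_eq_of_sign_eq hpa.symm hpb.symm hqa.symm hqb.symm hsign,
    ← Real.Angle.two_zsmul_eq_iff_eq hsign_ne_zero hsign]
  exact Sphere.two_zsmul_oangle_eq ha hp hq hb hpa hpb hqa hqb

theorem Sphere.angle_lt_angle_of_dist_center_lt_s9 {s : Sphere P} {a b q q' : P} (ha : a ∈ s)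
    (hb : b ∈ s) (hq : q ∈ s) (hab : a ≠ b) (hq' : dist q' s.center < s.radius)
    (hqq' : line[ℝ, a, b].SSameSide q q') : ∠ a q b < ∠ a q' b := by
  set p := s.secondInter a (q' -ᵥ a)
  have hsbtw : Sbtw ℝ a q' p := Sphere.sbtw_secondInter ha hq'
  have hp : p ∈ s := (Sphere.secondInter_mem _).2 ha
  have ha_mem : a ∈ line[ℝ, a, b] := left_mem_affineSpan_pair ℝ a b
  have hp_not_mem : p ∉ line[ℝ, a, b] := fun hp_mem =>
    hqq'.right_notMem (AffineSubspace.mem_of_wbtw hsbtw.wbtw ha_mem hp_mem)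
  have hqp : line[ℝ, a, b].SSameSide q p :=
    hqq'.trans ⟨hsbtw.wbtw.wSameSide₂₃ ha_mem, hqq'.right_notMem, hp_not_mem⟩
  have hq'_not_collinear : ¬ Collinear ℝ ({a, q', b} : Set P) := fun hcol =>
    hqq'.right_notMem (hcol.mem_affineSpan_of_mem_of_ne (by simp) (by simp) (by simp) hab)
  calc ∠ a q b = ∠ a p b := Sphere.angle_eq_of_sSameSide ha hb hq hp hqp
    _ < ∠ a q' b := angle_lt_angle_of_sbtw_s9 hsbtw hq'_not_collinear

end EuclideanGeometry

theorem stmt9_general (A B C Q Q' O₁ O₂ : Pt) (ρ₁ ρ₂ : ℝ)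
    (hncol₁ : ¬ Collinear ℝ ({A, B, Q} : Set Pt))
    (hncol₂ : ¬ Collinear ℝ ({B, C, Q} : Set Pt))
    (hO₁A : dist O₁ A = ρ₁) (hO₁B : dist O₁ B = ρ₁) (hO₁Q : dist O₁ Q = ρ₁)
    (hO₂B : dist O₂ B = ρ₂) (hO₂C : dist O₂ C = ρ₂) (hO₂Q : dist O₂ Q = ρ₂)
    (hQ'1 : dist Q' O₁ < ρ₁) (hQ'2 : dist Q' O₂ < ρ₂)
    (hside₁ : (affineSpan ℝ ({A, B} : Set Pt)).SSameSide Q Q')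
    (hside₂ : (affineSpan ℝ ({B, C} : Set Pt)).SSameSide Q Q') :
    ∠ A Q B < ∠ A Q' B ∧ ∠ B Q C < ∠ B Q' C := by
  have : Fact (Module.finrank ℝ Pt = 2) := ⟨finrank_euclideanSpace_fin⟩
  exact ⟨Sphere.angle_lt_angle_of_dist_center_lt_s9 (s := ⟨O₁, ρ₁⟩) (mem_sphere'.2 hO₁A)
      (mem_sphere'.2 hO₁B) (mem_sphere'.2 hO₁Q) (ne₁₂_of_not_collinear hncol₁) hQ'1 hside₁,
    Sphere.angle_lt_angle_of_dist_center_lt_s9 (s := ⟨O₂, ρ₂⟩) (mem_sphere'.2 hO₂B)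
      (mem_sphere'.2 hO₂C) (mem_sphere'.2 hO₂Q) (ne₁₂_of_not_collinear hncol₂) hQ'2 hside₂⟩

/-- If `A`, `B`, `C` are in counterclockwise order around `Q` (the three angles
at `Q` sum to `2π`) and `Q'` lies inside both the circumcircle of `A, B, Q`
and the circumcircle of `B, C, Q`, on the same side of line `AB` as `Q` and
the same side of line `BC` as `Q`, then `∠AQ'B > ∠AQB` and `∠BQ'C > ∠BQC`. -/
theorem stmt9 (A B C Q Q' O₁ O₂ : Pt) (ρ₁ ρ₂ : ℝ)
    (hncol₁ : ¬ Collinear ℝ ({A, B, Q} : Set Pt))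
    (hncol₂ : ¬ Collinear ℝ ({B, C, Q} : Set Pt))
    (hsum : ∠ A Q B + ∠ B Q C + ∠ C Q A = 2 * π)
    (hO₁A : dist O₁ A = ρ₁) (hO₁B : dist O₁ B = ρ₁) (hO₁Q : dist O₁ Q = ρ₁)
    (hO₂B : dist O₂ B = ρ₂) (hO₂C : dist O₂ C = ρ₂) (hO₂Q : dist O₂ Q = ρ₂)
    (hQ'1 : dist Q' O₁ < ρ₁) (hQ'2 : dist Q' O₂ < ρ₂)
    (hside₁ : (affineSpan ℝ ({A, B} : Set Pt)).SSameSide Q Q')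
    (hside₂ : (affineSpan ℝ ({B, C} : Set Pt)).SSameSide Q Q') :
    ∠ A Q B < ∠ A Q' B ∧ ∠ B Q C < ∠ B Q' C :=
  stmt9_general A B C Q Q' O₁ O₂ ρ₁ ρ₂ hncol₁ hncol₂ hO₁A hO₁B hO₁Q hO₂B hO₂C hO₂Q hQ'1 hQ'2 hside₁
    hside₂
end

section
/- Let P, A, B, C be points in the plane, Z the closed disk of radius r > 0 centered at P, and suppose P* maximizes Q ↦ min(∠AQB, ∠BQC, ∠CQA) over Z. If exactly two of the three angles at P* attain the minimum (say ∠AP*B = ∠BP*C < ∠CP*A, with A, B, C in counterclockwise order around P*), then |PP*| = r, i.e., P* lies on the boundary circle of Z. -/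
open EuclideanGeometry Real

/-!
Moving `P*` a little toward `B` increases both minimal angles `∠AP*B` and `∠BP*C`: by the
exterior angle theorem, sliding the vertex of a non-degenerate angle toward one of its endpoints
enlarges it. The strictly larger angle `∠CP*A` stays larger by continuity. So `P*` is not a local
maximum of the minimum angle, and it cannot be an interior point of the disk.
-/

open Filter Topology

section

variable {V P : Type*} [NormedAddCommGroup V] [InnerProductSpace ℝ V] [MetricSpace P]
  [NormedAddTorsor V P]

noncomputable def minAngle (A B C Q : P) : ℝ :=
  min (∠ A Q B) (min (∠ B Q C) (∠ C Q A))

lemma not_collinear_of_angle_pos_of_angle_lt_pi {p₁ p₂ p₃ : P} (h₁₂ : p₁ ≠ p₂) (h₃₂ : p₃ ≠ p₂)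
    (h₀ : 0 < ∠ p₁ p₂ p₃) (hπ : ∠ p₁ p₂ p₃ < π) : ¬Collinear ℝ ({p₁, p₂, p₃} : Set P) := by
  rw [collinear_iff_eq_or_eq_or_angle_eq_zero_or_angle_eq_pi]
  rintro (h | h | h | h)
  exacts [h₁₂ h, h₃₂ h, h₀.ne' h, hπ.ne h]

lemma angle_lt_angle_of_sbtw {A Q Q' B : P} (hAQB : ¬Collinear ℝ ({A, Q, B} : Set P))
    (h : Sbtw ℝ Q Q' B) : ∠ A Q B < ∠ A Q' B := by
  have hQ'AQ : ¬Collinear ℝ ({Q', A, Q} : Set P) := by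
    intro hcol
    have hBQ'Q : Collinear ℝ ({B, Q', Q} : Set P) :=
      h.wbtw.collinear.subset (by simp [Set.insert_subset_iff])
    refine hAQB (((hcol.collinear_insert_iff_of_ne (by simp) (by simp) h.left_ne.symm).2
      hBQ'Q).subset (by simp [Set.insert_subset_iff]))
  calc ∠ A Q B = ∠ A Q Q' := (h.angle_eq_right A).symm
    _ < ∠ Q' A Q + ∠ A Q Q' := lt_add_of_pos_left _ (angle_pos_of_not_collinear hQ'AQ)
    _ = ∠ A Q' B := (exterior_angle_eq_angle_add_angle B h.symm).symm

theorem not_isLocalMax_minAngle {A B C Q : P} (hA : Q ≠ A) (hB : Q ≠ B) (hC : Q ≠ C)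
    (heq : ∠ A Q B = ∠ B Q C) (hlt : ∠ B Q C < ∠ C Q A) : ¬IsLocalMax (minAngle A B C) Q := by
  have hmin : minAngle A B C Q = ∠ A Q B := by simp [minAngle, heq, hlt.le]
  have hCQB_eq : ∠ C Q B = ∠ A Q B := by rw [angle_comm, heq]
  -- `∠CQA ≤ ∠CQB + ∠BQA` rules out `∠AQB = 0`
  have hpos : 0 < ∠ A Q B := by
    linarith [angle_le_angle_add_angle Q C B A, angle_comm B Q A]
  have hltπ : ∠ A Q B < π := (heq ▸ hlt).trans_le (angle_le_pi C Q A)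
  have hAQB_noncol : ¬Collinear ℝ ({A, Q, B} : Set P) :=
    not_collinear_of_angle_pos_of_angle_lt_pi hA.symm hB.symm hpos hltπ
  have hCQB_noncol : ¬Collinear ℝ ({C, Q, B} : Set P) :=
    not_collinear_of_angle_pos_of_angle_lt_pi hC.symm hB.symm (hCQB_eq ▸ hpos) (hCQB_eq ▸ hltπ)
  have hpath : Tendsto (fun t : ℝ => AffineMap.lineMap Q B t) (𝓝[>] 0) (𝓝 Q) :=
    (AffineMap.lineMap_continuous.tendsto' 0 Q (by simp)).mono_left nhdsWithin_le_nhds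
  have hCA : ∀ᶠ X in 𝓝 Q, ∠ A Q B < ∠ C X A :=
    ((continuousAt_angle (x := (C, Q, A)) hC.symm hA.symm).comp (f := fun X : P => (C, X, A))
      (by fun_prop)).eventually (eventually_gt_nhds (heq ▸ hlt))
  intro hmax
  obtain ⟨t, ⟨ht_max, ht_CA⟩, ht1, ht0⟩ := (hpath.eventually (hmax.and hCA)).and
    ((eventually_lt_nhds one_pos).filter_mono nhdsWithin_le_nhds |>.and self_mem_nhdsWithin)
    |>.exists
  have hsbtw : Sbtw ℝ Q (AffineMap.lineMap Q B t) B := sbtw_lineMap_iff.2 ⟨hB, ht0, ht1⟩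
  have hAB := angle_lt_angle_of_sbtw hAQB_noncol hsbtw
  have hBC := angle_lt_angle_of_sbtw hCQB_noncol hsbtw
  rw [hCQB_eq, angle_comm C] at hBC
  exact (lt_min hAB (lt_min hBC ht_CA)).not_ge (hmin ▸ ht_max)

end

theorem stmt10_general (A B C P Pstar : Pt) (r : ℝ)
    (hout : ∀ X ∈ Metric.closedBall P r, X ≠ A ∧ X ≠ B ∧ X ≠ C)
    (hmem : Pstar ∈ Metric.closedBall P r)
    (hmax : ∀ Q ∈ Metric.closedBall P r,
      min (∠ A Q B) (min (∠ B Q C) (∠ C Q A)) ≤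
        min (∠ A Pstar B) (min (∠ B Pstar C) (∠ C Pstar A)))
    (heq : ∠ A Pstar B = ∠ B Pstar C)
    (hlt : ∠ B Pstar C < ∠ C Pstar A) :
    dist P Pstar = r := by
  obtain ⟨hA, hB, hC⟩ := hout Pstar hmem
  by_contra hne
  have hinterior : Metric.closedBall P r ∈ 𝓝 Pstar := by
    refine mem_of_superset (Metric.isOpen_ball.mem_nhds ?_) Metric.ball_subset_closedBall
    rw [Metric.mem_ball, dist_comm]
    exact (Metric.mem_closedBall'.1 hmem).lt_of_ne hne
  exact not_isLocalMax_minAngle hA hB hC heq hlt (IsMaxOn.isLocalMax hmax hinterior)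

/-- If `P*` maximizes `Q ↦ min(∠AQB, ∠BQC, ∠CQA)` over the closed disk `Z` of
radius `r` about `P`, with `A`, `B`, `C` in counterclockwise order around `P*`
(the three angles sum to `2π`), and exactly two of the three angles at `P*`
attain the minimum (`∠AP*B = ∠BP*C < ∠CP*A`), then `P*` lies on the boundary
circle of `Z`. -/
theorem stmt10 (A B C P Pstar : Pt) (r : ℝ) (hr : 0 < r)
    (hout : ∀ X ∈ Metric.closedBall P r, X ≠ A ∧ X ≠ B ∧ X ≠ C)
    (hmem : Pstar ∈ Metric.closedBall P r)
    (hmax : ∀ Q ∈ Metric.closedBall P r,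
      min (∠ A Q B) (min (∠ B Q C) (∠ C Q A)) ≤
        min (∠ A Pstar B) (min (∠ B Pstar C) (∠ C Pstar A)))
    (hccw : ∠ A Pstar B + ∠ B Pstar C + ∠ C Pstar A = 2 * π)
    (heq : ∠ A Pstar B = ∠ B Pstar C)
    (hlt : ∠ B Pstar C < ∠ C Pstar A) :
    dist P Pstar = r :=
  stmt10_general A B C P Pstar r hout hmem hmax heq hlt
end
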